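/- arXiv:math/0610563 — 3 statements merged into one kernel-verified Lean document; each statement's English description precedes it below -/
import Mathlib

section
/- Let K be a field, let C ∈ K be nonzero, and let t_i', t_j', t_k' ∈ K be nonzero with D := t_i' t_k' + C t_j' ≠ 0. Define t_i = D / t_i', t_j = t_i' t_k' / C, t_k = C t_i' t_j' / D. Then t_i, t_j, t_k are nonzero, t_i t_k + C t_j ≠ 0, and applying the same formulas to (t_i, t_j, t_k) recovers (t_i', t_j', t_k'): namely (t_i t_k + C t_j)/t_i = t_i', t_i t_k / C = t_j', and C t_i t_j /(t_i t_k + C t_j) = t_k'. In other words, the 3-move substitution h is a birational involution with h' ∘ h = id. -/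
/-- The 3-move substitution `h` is a birational involution: applying the formulas
`t_i = (t_i' t_k' + C t_j')/t_i'`, `t_j = t_i' t_k'/C`, `t_k = C t_i' t_j'/(t_i' t_k' + C t_j')`
to nonzero inputs yields nonzero outputs whose "denominator" `t_i t_k + C t_j` is nonzero,
and applying the same formulas again recovers `(t_i', t_j', t_k')`. -/
theorem threeMove_substitution_involution {K : Type*} [Field K]
    (C ti' tj' tk' : K) (hC : C ≠ 0) (hi : ti' ≠ 0) (hj : tj' ≠ 0) (hk : tk' ≠ 0)
    (hD : ti' * tk' + C * tj' ≠ 0) :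
    let ti := (ti' * tk' + C * tj') / ti'
    let tj := ti' * tk' / C
    let tk := C * ti' * tj' / (ti' * tk' + C * tj')
    ti ≠ 0 ∧ tj ≠ 0 ∧ tk ≠ 0 ∧ ti * tk + C * tj ≠ 0 ∧
      (ti * tk + C * tj) / ti = ti' ∧ ti * tk / C = tj' ∧
      C * ti * tj / (ti * tk + C * tj) = tk' := by
  intro ti tj tk
  have hti : ti ≠ 0 := div_ne_zero hD hi
  have htj : tj ≠ 0 := div_ne_zero (mul_ne_zero hi hk) hC
  have htk : tk ≠ 0 := div_ne_zero (mul_ne_zero (mul_ne_zero hC hi) hj) hD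
  have hsum : ti * tk + C * tj = ti' * tk' + C * tj' := by
    show (ti' * tk' + C * tj') / ti' * (C * ti' * tj' / (ti' * tk' + C * tj')) +
      C * (ti' * tk' / C) = _
    field_simp
    ring
  refine ⟨hti, htj, htk, hsum ▸ hD, ?_, ?_, ?_⟩
  · rw [hsum]
    show (ti' * tk' + C * tj') / ((ti' * tk' + C * tj') / ti') = ti'
    field_simp
  · show (ti' * tk' + C * tj') / ti' * (C * ti' * tj' / (ti' * tk' + C * tj')) / C = tj'
    field_simp
  · rw [hsum]
    show C * ((ti' * tk' + C * tj') / ti') * (ti' * tk' / C) / (ti' * tk' + C * tj') = tk'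
    field_simp
end

section
/- Let C > 0 be a real number. The map h : (ℝ_{>0})³ → (ℝ_{>0})³ given by h(t_i', t_j', t_k') = ((t_i' t_k' + C t_j')/t_i', t_i' t_k'/C, C t_i' t_j'/(t_i' t_k' + C t_j')) is well defined (takes positive values on positive inputs) and is a bijection of (ℝ_{>0})³ which is its own inverse. -/
/-- The 3-move substitution map on triples of real numbers, with constant `C`. -/
noncomputable def threeMoveMap (C : ℝ) : ℝ × ℝ × ℝ → ℝ × ℝ × ℝ :=
  fun p =>
    ((p.1 * p.2.2 + C * p.2.1) / p.1, p.1 * p.2.2 / C,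
      C * p.1 * p.2.1 / (p.1 * p.2.2 + C * p.2.1))

/-- The positive octant in `ℝ³`. -/
def posOctant : Set (ℝ × ℝ × ℝ) := {p | 0 < p.1 ∧ 0 < p.2.1 ∧ 0 < p.2.2}

/-- For `C > 0`, the 3-move substitution map takes positive values on positive inputs,
is its own inverse there, and is a bijection of the positive octant onto itself. -/
theorem threeMoveMap_bijOn_posOctant (C : ℝ) (hC : 0 < C) :
    (∀ p ∈ posOctant, threeMoveMap C p ∈ posOctant) ∧
    (∀ p ∈ posOctant, threeMoveMap C (threeMoveMap C p) = p) ∧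
    Set.BijOn (threeMoveMap C) posOctant posOctant := by
  have hmaps : ∀ p ∈ posOctant, threeMoveMap C p ∈ posOctant := by
    rintro ⟨a, b, c⟩ ⟨ha, hb, hc⟩
    have hS : 0 < a * c + C * b := by positivity
    exact ⟨div_pos hS ha, div_pos (by positivity) hC, div_pos (by positivity) hS⟩
  have hinv : ∀ p ∈ posOctant, threeMoveMap C (threeMoveMap C p) = p := by
    rintro ⟨a, b, c⟩ ⟨ha, hb, hc⟩
    have hS : (0:ℝ) < a * c + C * b := by positivity
    simp only [threeMoveMap, Prod.mk.injEq]
    refine ⟨?_, ?_, ?_⟩ <;> field_simp <;> ring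
  refine ⟨hmaps, hinv, ⟨hmaps, ?_, ?_⟩⟩
  · intro p hp q hq h
    have := hinv p hp
    rw [h, hinv q hq] at this
    exact this.symm
  · intro p hp
    exact ⟨threeMoveMap C p, hmaps p hp, hinv p hp⟩
end

section
/- Let K be a field, C ∈ K nonzero, and t_i', t_j', t_k' ∈ K nonzero with t_i' t_k' + C t_j' ≠ 0. With t_i = (t_i' t_k' + C t_j')/t_i', t_j = t_i' t_k'/C, t_k = C t_i' t_j'/(t_i' t_k' + C t_j'), one has t_i t_j⁻¹ t_k² + C t_k = C² t_j' (t_k')⁻¹. Equivalently, for nonzero coefficients a_{λ_i}, a_{λ_k} with C = a_{λ_k}/a_{λ_i}: a_{λ_i} t_i t_j⁻¹ t_k² + a_{λ_k} t_k = a_{λ_i}⁻¹ a_{λ_k}² t_j' t_k'⁻¹. -/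
/-- Under the 3-move substitution, two monomials must be grouped:
`t_i t_j⁻¹ t_k² + C t_k = C² t_j' t_k'⁻¹`; equivalently, with nonzero coefficients
`a_{λ_i}, a_{λ_k}` and `C = a_{λ_k}/a_{λ_i}`,
`a_{λ_i} t_i t_j⁻¹ t_k² + a_{λ_k} t_k = a_{λ_i}⁻¹ a_{λ_k}² t_j' t_k'⁻¹`. -/
theorem threeMove_grouped_monomials {K : Type*} [Field K]
    (C ti' tj' tk' : K) (hC : C ≠ 0) (hi : ti' ≠ 0) (hj : tj' ≠ 0) (hk : tk' ≠ 0)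
    (hD : ti' * tk' + C * tj' ≠ 0) :
    let ti := (ti' * tk' + C * tj') / ti'
    let tj := ti' * tk' / C
    let tk := C * ti' * tj' / (ti' * tk' + C * tj')
    ti * tj⁻¹ * tk ^ 2 + C * tk = C ^ 2 * tj' * tk'⁻¹ ∧
      ∀ ali alk : K, ali ≠ 0 → alk ≠ 0 → C = alk / ali →
        ali * (ti * tj⁻¹ * tk ^ 2) + alk * tk = ali⁻¹ * alk ^ 2 * tj' * tk'⁻¹ := by
  intro ti tj tk
  have key : ti * tj⁻¹ * tk ^ 2 + C * tk = C ^ 2 * tj' * tk'⁻¹ := by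
    show ((ti' * tk' + C * tj') / ti') * (ti' * tk' / C)⁻¹ *
        (C * ti' * tj' / (ti' * tk' + C * tj')) ^ 2 +
        C * (C * ti' * tj' / (ti' * tk' + C * tj')) = C ^ 2 * tj' * tk'⁻¹
    set D := ti' * tk' + C * tj' with hDdef
    have h1 : (D / ti') * (ti' * tk' / C)⁻¹ * (C * ti' * tj' / D) ^ 2
        = C ^ 3 * tj' ^ 2 / (tk' * D) := by
      field_simp
    rw [h1]
    field_simp
    linear_combination C ^ 2 * tj' * tk' * hDdef
  refine ⟨key, fun ali alk hai hak hCa => ?_⟩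
  have h2 : ali * (ti * tj⁻¹ * tk ^ 2 + C * tk) = ali * (C ^ 2 * tj' * tk'⁻¹) := by rw [key]
  calc ali * (ti * tj⁻¹ * tk ^ 2) + alk * tk
      = ali * (ti * tj⁻¹ * tk ^ 2 + C * tk) := by rw [hCa]; field_simp
    _ = ali * (C ^ 2 * tj' * tk'⁻¹) := h2
    _ = ali⁻¹ * alk ^ 2 * tj' * tk'⁻¹ := by rw [hCa]; field_simp
end
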